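/- arXiv:2605.28356 — 2 statements merged into one kernel-verified Lean document; each statement's English description precedes it below -/
import Mathlib

section
/- The optimal value of the aggregated GEP problem is a lower bound on the optimal value of the full-scale GEP problem: for the single-generator, no-storage model, min over aggregated-feasible ẑ of f̂(ẑ) ≤ min over full-scale feasible z of f(z), assuming both minima are attained and all cost coefficients are nonnegative. -/
open Finset
open scoped BigOperators

/-!
Averaging a full-scale solution over each cluster gives an aggregated solution with the same
investment `x`: the balance constraint is affine and the capacity constraint linear in the
operating variables, so both survive averaging, and the weight `|T_r|` turns each cluster average
back into the cluster sum, so the objective is unchanged. Hence the feasible values of the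
full-scale problem are among those of the aggregated one, and the least of the latter is smaller.
-/

theorem Fintype.sum_eq_sum_sum_of_disjoint_of_forall_mem {τ ι M : Type*} [Fintype τ] [Fintype ι]
    [AddCommMonoid M] (c : ι → Finset τ) (hdisj : ∀ r r', r ≠ r' → Disjoint (c r) (c r'))
    (hcover : ∀ t, ∃ r, t ∈ c r) (g : τ → M) :
    ∑ t, g t = ∑ r, ∑ t ∈ c r, g t := by
  classical
  have huniv : (univ : Finset τ) = univ.biUnion c := by
    ext t
    simpa using hcover t
  rw [huniv, sum_biUnion fun r _ r' _ h => hdisj r r' h]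

section GEP

variable {τ ι : Type*} [Fintype τ] [Fintype ι]

def fullScaleValues (Δ Cinv C Cns : ℝ) (D F : τ → ℝ) : Set ℝ :=
  {v | ∃ (x : ℝ) (p ens : τ → ℝ), 0 ≤ x ∧ (∀ t, 0 ≤ p t) ∧
    (∀ t, 0 ≤ ens t) ∧ (∀ t, Δ * p t + ens t = D t) ∧ (∀ t, p t ≤ F t * x) ∧
    v = Cinv * x + ∑ t, (Δ * C * p t + Cns * ens t)}

def aggregatedValues (c : ι → Finset τ) (Δ Cinv C Cns : ℝ) (D F : τ → ℝ) : Set ℝ :=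
  {v | ∃ (x : ℝ) (p ens : ι → ℝ), 0 ≤ x ∧ (∀ r, 0 ≤ p r) ∧
    (∀ r, 0 ≤ ens r) ∧
    (∀ r, Δ * p r + ens r = (∑ t ∈ c r, D t) / ((c r).card : ℝ)) ∧
    (∀ r, p r ≤ ((∑ t ∈ c r, F t) / ((c r).card : ℝ)) * x) ∧
    v = Cinv * x + ∑ r, ((c r).card : ℝ) * (Δ * C * p r + Cns * ens r)}

theorem fullScaleValues_subset_aggregatedValues (c : ι → Finset τ)
    (hdisj : ∀ r r', r ≠ r' → Disjoint (c r) (c r')) (hcover : ∀ t, ∃ r, t ∈ c r)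
    (Δ Cinv C Cns : ℝ) (D F : τ → ℝ) :
    fullScaleValues Δ Cinv C Cns D F ⊆ aggregatedValues c Δ Cinv C Cns D F := by
  rintro v ⟨x, p, ens, hx, hp, hens, hbal, hcap, rfl⟩
  refine ⟨x, fun r => 𝔼 t ∈ c r, p t, fun r => 𝔼 t ∈ c r, ens t, hx,
    fun r => expect_nonneg fun t _ => hp t, fun r => expect_nonneg fun t _ => hens t,
    fun r => ?balance, fun r => ?capacity, ?objective⟩
  case balance =>
    rw [← expect_eq_sum_div_card, mul_expect, ← expect_add_distrib]
    exact expect_congr rfl fun t _ => hbal t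
  case capacity =>
    rw [← expect_eq_sum_div_card, expect_mul]
    exact expect_le_expect fun t _ => hcap t
  case objective =>
    rw [Fintype.sum_eq_sum_sum_of_disjoint_of_forall_mem c hdisj hcover]
    congr 1
    refine sum_congr rfl fun r _ => ?_
    rw [mul_expect, mul_expect, ← expect_add_distrib, card_mul_expect]

end GEP

theorem stmt_4_general {τ ι : Type*} [Fintype τ] [Fintype ι]
    (c : ι → Finset τ)
    (hdisj : ∀ r r', r ≠ r' → Disjoint (c r) (c r'))
    (hcover : ∀ t : τ, ∃ r, t ∈ c r)
    (Δ Cinv C Cns : ℝ)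
    (D F : τ → ℝ) (fstar fhat : ℝ)
    (hfull : IsLeast {v | ∃ (x : ℝ) (p ens : τ → ℝ), 0 ≤ x ∧ (∀ t, 0 ≤ p t) ∧
        (∀ t, 0 ≤ ens t) ∧ (∀ t, Δ * p t + ens t = D t) ∧ (∀ t, p t ≤ F t * x) ∧
        v = Cinv * x + ∑ t, (Δ * C * p t + Cns * ens t)} fstar)
    (hagg : IsLeast {v | ∃ (x : ℝ) (p ens : ι → ℝ), 0 ≤ x ∧ (∀ r, 0 ≤ p r) ∧
        (∀ r, 0 ≤ ens r) ∧
        (∀ r, Δ * p r + ens r = (∑ t ∈ c r, D t) / ((c r).card : ℝ)) ∧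
        (∀ r, p r ≤ ((∑ t ∈ c r, F t) / ((c r).card : ℝ)) * x) ∧
        v = Cinv * x + ∑ r, ((c r).card : ℝ) * (Δ * C * p r + Cns * ens r)} fhat) :
    fhat ≤ fstar :=
  hfull.mono hagg (fullScaleValues_subset_aggregatedValues c hdisj hcover Δ Cinv C Cns D F)

/-- The optimal value of the aggregated GEP problem is a lower bound on the
optimal value of the full-scale GEP problem (single generator, no storage). -/
theorem stmt_4 {τ ι : Type*} [Fintype τ] [Fintype ι]
    (c : ι → Finset τ)
    (hdisj : ∀ r r', r ≠ r' → Disjoint (c r) (c r'))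
    (hcover : ∀ t : τ, ∃ r, t ∈ c r)
    (hne : ∀ r, (c r).Nonempty)
    (Δ Cinv C Cns : ℝ) (hΔ : 0 < Δ)
    (hCinv : 0 ≤ Cinv) (hC : 0 ≤ C) (hCns : 0 ≤ Cns)
    (D F : τ → ℝ) (fstar fhat : ℝ)
    (hfull : IsLeast {v | ∃ (x : ℝ) (p ens : τ → ℝ), 0 ≤ x ∧ (∀ t, 0 ≤ p t) ∧
        (∀ t, 0 ≤ ens t) ∧ (∀ t, Δ * p t + ens t = D t) ∧ (∀ t, p t ≤ F t * x) ∧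
        v = Cinv * x + ∑ t, (Δ * C * p t + Cns * ens t)} fstar)
    (hagg : IsLeast {v | ∃ (x : ℝ) (p ens : ι → ℝ), 0 ≤ x ∧ (∀ r, 0 ≤ p r) ∧
        (∀ r, 0 ≤ ens r) ∧
        (∀ r, Δ * p r + ens r = (∑ t ∈ c r, D t) / ((c r).card : ℝ)) ∧
        (∀ r, p r ≤ ((∑ t ∈ c r, F t) / ((c r).card : ℝ)) * x) ∧
        v = Cinv * x + ∑ r, ((c r).card : ℝ) * (Δ * C * p r + Cns * ens r)} fhat) :
    fhat ≤ fstar :=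
  stmt_4_general c hdisj hcover Δ Cinv C Cns D F fstar fhat hfull hagg
end

section
/- Refining the partition cannot decrease the aggregated optimal value (lower bound improves): if partition P' of T refines partition P (every cluster of P' is contained in a cluster of P), then the optimal value of the aggregated single-generator no-storage GEP problem under P is at most that under P', which in turn is at most the full-scale optimal value. Here both aggregated problems use within-cluster averages of the data, the cost coefficients are nonnegative with C^ns ≥ Δ·C, and all minima are attained. -/
/-!
Written in cluster totals `P r = |T_r| p r` and `E r = |T_r| e r` instead of averages, every
constraint and the objective of the aggregated problem are additive over the clusters. A fine
feasible point therefore yields a coarse one of the same value by summing its totals over the fine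
clusters inside each coarse cluster. The full-scale problem is the aggregated problem over the
partition into singletons, which refines every partition.
-/

open Finset

namespace CapacityExpansion

variable {τ ι ι' : Type*}

def fullValues [Fintype τ] (Δ Cinv C Cns : ℝ) (D F : τ → ℝ) : Set ℝ :=
  {v | ∃ (x : ℝ) (p ens : τ → ℝ), 0 ≤ x ∧ (∀ t, 0 ≤ p t) ∧
    (∀ t, 0 ≤ ens t) ∧ (∀ t, Δ * p t + ens t = D t) ∧ (∀ t, p t ≤ F t * x) ∧
    v = Cinv * x + ∑ t, (Δ * C * p t + Cns * ens t)}

def aggValues [Fintype ι] (c : ι → Finset τ) (Δ Cinv C Cns : ℝ) (D F : τ → ℝ) : Set ℝ :=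
  {v | ∃ (x : ℝ) (p ens : ι → ℝ), 0 ≤ x ∧ (∀ r, 0 ≤ p r) ∧
    (∀ r, 0 ≤ ens r) ∧
    (∀ r, Δ * p r + ens r = (∑ t ∈ c r, D t) / ((c r).card : ℝ)) ∧
    (∀ r, p r ≤ ((∑ t ∈ c r, F t) / ((c r).card : ℝ)) * x) ∧
    v = Cinv * x + ∑ r, ((c r).card : ℝ) * (Δ * C * p r + Cns * ens r)}

def totalValues [Fintype ι] (c : ι → Finset τ) (Δ Cinv C Cns : ℝ) (D F : τ → ℝ) : Set ℝ :=
  {v | ∃ (x : ℝ) (P E : ι → ℝ), 0 ≤ x ∧ (∀ r, 0 ≤ P r) ∧ (∀ r, 0 ≤ E r) ∧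
    (∀ r, Δ * P r + E r = ∑ t ∈ c r, D t) ∧ (∀ r, P r ≤ (∑ t ∈ c r, F t) * x) ∧
    v = Cinv * x + ∑ r, (Δ * C * P r + Cns * E r)}

theorem aggValues_eq_totalValues [Fintype ι] {c : ι → Finset τ} (hne : ∀ r, (c r).Nonempty)
    (Δ Cinv C Cns : ℝ) (D F : τ → ℝ) :
    aggValues c Δ Cinv C Cns D F = totalValues c Δ Cinv C Cns D F := by
  have hw : ∀ r, (0 : ℝ) < (c r).card := fun r => mod_cast (hne r).card_pos
  ext v
  constructor
  · rintro ⟨x, p, ens, hx, hp, hens, hdem, hcap, rfl⟩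
    refine ⟨x, fun r => (c r).card * p r, fun r => (c r).card * ens r, hx,
      fun r => mul_nonneg (hw r).le (hp r), fun r => mul_nonneg (hw r).le (hens r),
      fun r => ?_, fun r => ?_, ?_⟩
    · rw [← mul_div_cancel₀ (∑ t ∈ c r, D t) (hw r).ne', ← hdem r]
      ring
    · calc (c r).card * p r ≤ (c r).card * ((∑ t ∈ c r, F t) / (c r).card * x) :=
            mul_le_mul_of_nonneg_left (hcap r) (hw r).le
        _ = (∑ t ∈ c r, F t) * x := by field_simp
    · exact congrArg (Cinv * x + ·) (sum_congr rfl fun r _ => by ring)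
  · rintro ⟨x, P, E, hx, hP, hE, hdem, hcap, rfl⟩
    refine ⟨x, fun r => P r / (c r).card, fun r => E r / (c r).card, hx,
      fun r => div_nonneg (hP r) (hw r).le, fun r => div_nonneg (hE r) (hw r).le,
      fun r => ?_, fun r => ?_, ?_⟩
    · rw [← hdem r]
      ring
    · rw [div_mul_eq_mul_div]
      exact div_le_div_of_nonneg_right (hcap r) (hw r).le
    · congr 1
      refine sum_congr rfl fun r _ => ?_
      field_simp [(hw r).ne']

theorem totalValues_singleton [Fintype τ] (Δ Cinv C Cns : ℝ) (D F : τ → ℝ) :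
    totalValues (fun t : τ => ({t} : Finset τ)) Δ Cinv C Cns D F = fullValues Δ Cinv C Cns D F := by
  simp only [totalValues, fullValues, sum_singleton]

theorem sum_eq_sum_fiber_of_refines [Fintype ι'] [DecidableEq ι] {c : ι → Finset τ} {c' : ι' → Finset τ}
    (hdisj : Pairwise (Function.onFun Disjoint c)) (hdisj' : Pairwise (Function.onFun Disjoint c'))
    (hcover' : ∀ t, ∃ r', t ∈ c' r') {σ : ι' → ι} (hσ : ∀ r', c' r' ⊆ c (σ r'))
    (f : τ → ℝ) (r : ι) :
    ∑ t ∈ c r, f t = ∑ r' ∈ univ.filter (σ · = r), ∑ t ∈ c' r', f t := by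
  classical
  have hunion : (univ.filter (σ · = r)).biUnion c' = c r := by
    ext t
    simp only [mem_biUnion, mem_filter, mem_univ, true_and]
    refine ⟨fun ⟨r', hr', ht⟩ => hr' ▸ hσ r' ht, fun ht => ?_⟩
    obtain ⟨r', ht'⟩ := hcover' t
    refine ⟨r', by_contra fun h => ?_, ht'⟩
    exact disjoint_left.1 (hdisj h) (hσ r' ht') ht
  rw [← hunion, sum_biUnion fun a _ b _ hab => hdisj' hab]

theorem totalValues_subset_of_refines [Fintype ι] [Fintype ι'] {c : ι → Finset τ} {c' : ι' → Finset τ}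
    (hdisj : Pairwise (Function.onFun Disjoint c)) (hdisj' : Pairwise (Function.onFun Disjoint c'))
    (hcover' : ∀ t, ∃ r', t ∈ c' r') (hrefine : ∀ r', ∃ r, c' r' ⊆ c r)
    (Δ Cinv C Cns : ℝ) (D F : τ → ℝ) :
    totalValues c' Δ Cinv C Cns D F ⊆ totalValues c Δ Cinv C Cns D F := by
  classical
  choose σ hσ using hrefine
  have hsplit := sum_eq_sum_fiber_of_refines hdisj hdisj' hcover' hσ
  rintro v ⟨x, P, E, hx, hP, hE, hdem, hcap, rfl⟩
  refine ⟨x, fun r => ∑ r' ∈ univ.filter (σ · = r), P r',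
    fun r => ∑ r' ∈ univ.filter (σ · = r), E r', hx,
    fun r => sum_nonneg fun r' _ => hP r', fun r => sum_nonneg fun r' _ => hE r',
    fun r => ?_, fun r => ?_, ?_⟩
  · rw [hsplit, mul_sum, ← sum_add_distrib]
    exact sum_congr rfl fun r' _ => hdem r'
  · rw [hsplit, sum_mul]
    exact sum_le_sum fun r' _ => hcap r'
  · rw [← sum_fiberwise univ σ fun r' => Δ * C * P r' + Cns * E r']
    simp only [mul_sum, sum_add_distrib]

end CapacityExpansion

open CapacityExpansion in
theorem stmt_16_general {τ ι ι' : Type*} [Fintype τ] [Fintype ι] [Fintype ι']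
    (c : ι → Finset τ) (c' : ι' → Finset τ)
    (hdisj : ∀ r r', r ≠ r' → Disjoint (c r) (c r'))
    (hne : ∀ r, (c r).Nonempty)
    (hdisj' : ∀ r r', r ≠ r' → Disjoint (c' r) (c' r'))
    (hcover' : ∀ t : τ, ∃ r, t ∈ c' r)
    (hne' : ∀ r, (c' r).Nonempty)
    (hrefine : ∀ r' : ι', ∃ r : ι, c' r' ⊆ c r)
    (Δ Cinv C Cns : ℝ)
    (D F : τ → ℝ)
    (vfull vP vP' : ℝ)
    (hfull : IsLeast {v | ∃ (x : ℝ) (p ens : τ → ℝ), 0 ≤ x ∧ (∀ t, 0 ≤ p t) ∧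
        (∀ t, 0 ≤ ens t) ∧ (∀ t, Δ * p t + ens t = D t) ∧ (∀ t, p t ≤ F t * x) ∧
        v = Cinv * x + ∑ t, (Δ * C * p t + Cns * ens t)} vfull)
    (hP : IsLeast {v | ∃ (x : ℝ) (p ens : ι → ℝ), 0 ≤ x ∧ (∀ r, 0 ≤ p r) ∧
        (∀ r, 0 ≤ ens r) ∧
        (∀ r, Δ * p r + ens r = (∑ t ∈ c r, D t) / ((c r).card : ℝ)) ∧
        (∀ r, p r ≤ ((∑ t ∈ c r, F t) / ((c r).card : ℝ)) * x) ∧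
        v = Cinv * x + ∑ r, ((c r).card : ℝ) * (Δ * C * p r + Cns * ens r)} vP)
    (hP' : IsLeast {v | ∃ (x : ℝ) (p ens : ι' → ℝ), 0 ≤ x ∧ (∀ r, 0 ≤ p r) ∧
        (∀ r, 0 ≤ ens r) ∧
        (∀ r, Δ * p r + ens r = (∑ t ∈ c' r, D t) / ((c' r).card : ℝ)) ∧
        (∀ r, p r ≤ ((∑ t ∈ c' r, F t) / ((c' r).card : ℝ)) * x) ∧
        v = Cinv * x + ∑ r, ((c' r).card : ℝ) * (Δ * C * p r + Cns * ens r)} vP') :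
    vP ≤ vP' ∧ vP' ≤ vfull := by
  have hcoarse : aggValues c' Δ Cinv C Cns D F ⊆ aggValues c Δ Cinv C Cns D F := by
    rw [aggValues_eq_totalValues hne, aggValues_eq_totalValues hne']
    exact totalValues_subset_of_refines hdisj hdisj' hcover' hrefine _ _ _ _ _ _
  have hfine : fullValues Δ Cinv C Cns D F ⊆ aggValues c' Δ Cinv C Cns D F := by
    rw [← totalValues_singleton, aggValues_eq_totalValues hne']
    exact totalValues_subset_of_refines hdisj' (fun _ _ h => disjoint_singleton.2 h)
      (fun t => ⟨t, mem_singleton_self t⟩)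
      (fun t => (hcover' t).imp fun _ h => singleton_subset_iff.2 h) _ _ _ _ _ _
  exact ⟨hP.2 (hcoarse hP'.1), hP'.2 (hfine hfull.1)⟩

/-- Refining the partition cannot decrease the aggregated optimal value:
the coarse aggregated optimum is at most the fine aggregated optimum, which
is at most the full-scale optimum. -/
theorem stmt_16 {τ ι ι' : Type*} [Fintype τ] [Fintype ι] [Fintype ι']
    (c : ι → Finset τ) (c' : ι' → Finset τ)
    (hdisj : ∀ r r', r ≠ r' → Disjoint (c r) (c r'))
    (hcover : ∀ t : τ, ∃ r, t ∈ c r)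
    (hne : ∀ r, (c r).Nonempty)
    (hdisj' : ∀ r r', r ≠ r' → Disjoint (c' r) (c' r'))
    (hcover' : ∀ t : τ, ∃ r, t ∈ c' r)
    (hne' : ∀ r, (c' r).Nonempty)
    (hrefine : ∀ r' : ι', ∃ r : ι, c' r' ⊆ c r)
    (Δ Cinv C Cns : ℝ) (hΔ : 0 < Δ)
    (hCinv : 0 ≤ Cinv) (hC : 0 ≤ C) (hCns : 0 ≤ Cns) (hCnsC : Δ * C ≤ Cns)
    (D F : τ → ℝ)
    (vfull vP vP' : ℝ)
    (hfull : IsLeast {v | ∃ (x : ℝ) (p ens : τ → ℝ), 0 ≤ x ∧ (∀ t, 0 ≤ p t) ∧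
        (∀ t, 0 ≤ ens t) ∧ (∀ t, Δ * p t + ens t = D t) ∧ (∀ t, p t ≤ F t * x) ∧
        v = Cinv * x + ∑ t, (Δ * C * p t + Cns * ens t)} vfull)
    (hP : IsLeast {v | ∃ (x : ℝ) (p ens : ι → ℝ), 0 ≤ x ∧ (∀ r, 0 ≤ p r) ∧
        (∀ r, 0 ≤ ens r) ∧
        (∀ r, Δ * p r + ens r = (∑ t ∈ c r, D t) / ((c r).card : ℝ)) ∧
        (∀ r, p r ≤ ((∑ t ∈ c r, F t) / ((c r).card : ℝ)) * x) ∧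
        v = Cinv * x + ∑ r, ((c r).card : ℝ) * (Δ * C * p r + Cns * ens r)} vP)
    (hP' : IsLeast {v | ∃ (x : ℝ) (p ens : ι' → ℝ), 0 ≤ x ∧ (∀ r, 0 ≤ p r) ∧
        (∀ r, 0 ≤ ens r) ∧
        (∀ r, Δ * p r + ens r = (∑ t ∈ c' r, D t) / ((c' r).card : ℝ)) ∧
        (∀ r, p r ≤ ((∑ t ∈ c' r, F t) / ((c' r).card : ℝ)) * x) ∧
        v = Cinv * x + ∑ r, ((c' r).card : ℝ) * (Δ * C * p r + Cns * ens r)} vP') :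
    vP ≤ vP' ∧ vP' ≤ vfull :=
  stmt_16_general c c' hdisj hne hdisj' hcover' hne' hrefine Δ Cinv C Cns D F vfull vP vP' hfull hP
    hP'
end
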